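/- Let 𝔮₀, 𝔮₁, 𝔮₂ be partitions, let X = B if |𝔮₀| is odd and X ∈ {C, D} (with |𝔮₀| even) otherwise. Then ((𝔮₀ + 2𝔮₁)_X + 2𝔮₂)_X = (𝔮₀ + 2(𝔮₁ + 𝔮₂))_X, where (·)_X denotes the X-collapse and + denotes coordinatewise sum of partitions (2𝔮 means doubling every part). -/

import Mathlib

/-
Fix the parity `ε` of the parts that must occur with even multiplicity (`ε = 0` for types B
and D, `ε = 1` for type C), and let `v` be the largest part of parity `ε` occurring an odd
number of times in `p`. Lowering the last `v` by one and raising the first part below `v - 1`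
by one lowers the partial sums of `p` by one exactly at the indices `k` with
`#{parts ≥ v} ≤ k ≤ #{parts ≥ v - 1}`. At these indices no `r` of the required parity with
`r ≤ p + 2u` reaches the partial sum of `p + 2u`: equality would force the excesses
`∑ (rⱼ - c)⁺` and `∑ ((p + 2u)ⱼ - c)⁺` over the level `c = v - 1 + 2uₖ` to agree, but the
first is even and the second odd. Iterating the step gives `p' ≤ p` of the required parity
such that `r ≤ p + 2u` implies `r ≤ p' + 2u` for all such `r`. For `u = 0` this makes `p'` an
`X`-collapse of `p`; since `p' ≤ p_X ≤ p`, the partitions `p_X + 2u` and `p + 2u` then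
dominate the same partitions of type `X`, so they have the same `X`-collapse.
-/

noncomputable section
open scoped Classical

namespace PaperStmt

/-- The parts of a partition (multiset of naturals) sorted in non-increasing order. -/
def sortDesc (p : Multiset ℕ) : List ℕ := (p.sort (· ≤ ·)).reverse

/-- Partial sum of the first `k` entries of a list. -/
def psum (l : List ℕ) (k : ℕ) : ℕ := (l.take k).sum

/-- Dominance order on partitions of the same integer. -/
def Dom (p q : Multiset ℕ) : Prop :=
  p.sum = q.sum ∧ ∀ k, psum (sortDesc p) k ≤ psum (sortDesc q) k

/-- A partition: a multiset of positive parts. -/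
def IsPartition (p : Multiset ℕ) : Prop := 0 ∉ p

/-- Type B: partition of an odd integer, every even part with even multiplicity. -/
def typeB (p : Multiset ℕ) : Prop := Odd p.sum ∧ ∀ v ≠ 0, Even v → Even (p.count v)

/-- Type C: partition of an even integer, every odd part with even multiplicity. -/
def typeC (p : Multiset ℕ) : Prop := Even p.sum ∧ ∀ v, Odd v → Even (p.count v)

/-- Type D: partition of an even integer, every even part with even multiplicity. -/
def typeD (p : Multiset ℕ) : Prop := Even p.sum ∧ ∀ v ≠ 0, Even v → Even (p.count v)

/-- `q` is the `X`-collapse of `p`: the largest partition of type `X` below `p`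
in dominance order. -/
def IsCollapse (X : Multiset ℕ → Prop) (p q : Multiset ℕ) : Prop :=
  X q ∧ Dom q p ∧ ∀ q', X q' → Dom q' p → Dom q' q

def collapse (X : Multiset ℕ → Prop) (p : Multiset ℕ) : Multiset ℕ :=
  if h : ∃ q, IsCollapse X p q then h.choose else 0

def collapseB : Multiset ℕ → Multiset ℕ := collapse typeB
def collapseC : Multiset ℕ → Multiset ℕ := collapse typeC
def collapseD : Multiset ℕ → Multiset ℕ := collapse typeD

/-- The largest part. -/
def maxPart (p : Multiset ℕ) : ℕ := (sortDesc p).headI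

/-- The smallest (positive) part. -/
def minPart (p : Multiset ℕ) : ℕ := (sortDesc p).getLastD 0

/-- `p⁺`: add 1 to the largest part. -/
def pplus (p : Multiset ℕ) : Multiset ℕ := (maxPart p + 1) ::ₘ p.erase (maxPart p)

/-- `p⁻`: subtract 1 from the smallest part, dropping a resulting zero. -/
def pminus (p : Multiset ℕ) : Multiset ℕ :=
  Multiset.filter (0 < ·) ((minPart p - 1) ::ₘ p.erase (minPart p))

/-- `p⁺⁻`: add 1 to the largest part and subtract 1 from the smallest part. -/
def pmOp (p : Multiset ℕ) : Multiset ℕ := pminus (pplus p)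

def zipSum : List ℕ → List ℕ → List ℕ
  | [], l => l
  | a :: as, [] => a :: as
  | a :: as, b :: bs => (a + b) :: zipSum as bs

/-- Coordinatewise sum of two partitions. -/
def addP (p q : Multiset ℕ) : Multiset ℕ := (zipSum (sortDesc p) (sortDesc q) : List ℕ)

/-- Double every part of a partition. -/
def doubleP (p : Multiset ℕ) : Multiset ℕ := p.map (fun v => 2 * v)

/-- The partition `𝔰(m; n) = (n^a, b)` where `m = n a + b`, `0 ≤ b < n`. -/
def sMn (m n : ℕ) : Multiset ℕ :=
  Multiset.replicate (m / n) n + (if m % n = 0 then 0 else {m % n})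

/-- The duality `d_{com,A}^{(n)}`: coordinatewise sum of the `𝔰(pᵢ; n)`. -/
def dcomA (n : ℕ) (p : Multiset ℕ) : Multiset ℕ :=
  (sortDesc p).foldr (fun q acc => addP (sMn q n) acc) 0

/-- Transpose (conjugate) of a partition: the `j`-th part is `#{i : pᵢ ≥ j}`. -/
def transposeP (p : Multiset ℕ) : Multiset ℕ :=
  Multiset.filter (0 < ·)
    ((Multiset.range (maxPart p)).map (fun j => (p.filter (fun v => j + 1 ≤ v)).card))

open Finset

lemma getD_zipSum (a b : List ℕ) (t : ℕ) :
    (zipSum a b).getD t 0 = a.getD t 0 + b.getD t 0 := by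
  induction a generalizing b t with
  | nil => simp [zipSum]
  | cons x xs ih =>
    cases b with
    | nil => simp [zipSum]
    | cons y ys =>
      cases t with
      | zero => rfl
      | succ t => exact ih ys t

lemma sum_zipSum (a b : List ℕ) : (zipSum a b).sum = a.sum + b.sum := by
  induction a generalizing b with
  | nil => simp [zipSum]
  | cons x xs ih =>
    cases b with
    | nil => simp [zipSum]
    | cons y ys => simp only [zipSum, List.sum_cons, ih]; ring

lemma zipSum_map_double (a b : List ℕ) :
    zipSum (a.map (2 * ·)) (b.map (2 * ·)) = (zipSum a b).map (2 * ·) := by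
  induction a generalizing b with
  | nil => simp [zipSum]
  | cons x xs ih => cases b <;> simp [zipSum, ih, mul_add]

lemma zipSum_assoc (a b c : List ℕ) : zipSum (zipSum a b) c = zipSum a (zipSum b c) := by
  induction a generalizing b c with
  | nil => simp [zipSum]
  | cons x xs ih => cases b <;> cases c <;> simp [zipSum, ih, add_assoc]

lemma sortedGE_iff_antitone_getD {l : List ℕ} : l.SortedGE ↔ Antitone (l.getD · 0) := by
  constructor
  · intro hl s t hst
    show l.getD t 0 ≤ l.getD s 0
    rcases lt_or_ge t l.length with ht | ht
    · rw [List.getD_eq_getElem _ _ ht, List.getD_eq_getElem _ _ (hst.trans_lt ht)]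
      exact hl.getElem_ge_getElem_of_le hst
    · rw [List.getD_eq_default _ _ ht]
      exact Nat.zero_le _
  · intro hl
    refine List.sortedGE_of_getElem_ge_getElem_of_le fun i j hi hj hji => ?_
    rw [← List.getD_eq_getElem _ 0 hi, ← List.getD_eq_getElem _ 0 hj]
    exact hl hji

lemma sum_take_eq_sum_range_getD (l : List ℕ) (k : ℕ) :
    (l.take k).sum = ∑ t ∈ range k, l.getD t 0 := by
  induction l generalizing k with
  | nil => simp
  | cons x xs ih => cases k <;> simp [sum_range_succ', ih, add_comm]

lemma sum_map_eq_sum_range_getD (l : List ℕ) {g : ℕ → ℕ} (hg : g 0 = 0) {k : ℕ}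
    (hk : l.length ≤ k) : (l.map g).sum = ∑ t ∈ range k, g (l.getD t 0) := by
  induction l generalizing k with
  | nil => simp [hg]
  | cons x xs ih =>
    obtain ⟨k, rfl⟩ : ∃ k', k = k' + 1 := ⟨k - 1, by simp at hk; omega⟩
    simp [sum_range_succ', ih (show xs.length ≤ k by simpa using hk), add_comm]

lemma getD_map_double (l : List ℕ) (t : ℕ) : (l.map (2 * ·)).getD t 0 = 2 * l.getD t 0 :=
  List.getD_map (n := t) l 0 (2 * ·)

lemma sortedGE_sortDesc (p : Multiset ℕ) : (sortDesc p).SortedGE :=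
  (Multiset.pairwise_sort p _).sortedLE.reverse

lemma coe_sortDesc (p : Multiset ℕ) : (sortDesc p : Multiset ℕ) = p := by
  rw [sortDesc, Multiset.coe_reverse, Multiset.sort_eq]

@[simp] lemma length_sortDesc (p : Multiset ℕ) : (sortDesc p).length = p.card := by
  simp [sortDesc]

lemma sortDesc_coe {l : List ℕ} (hl : l.SortedGE) : sortDesc l = l :=
  List.Perm.eq_of_sortedGE (sortedGE_sortDesc _) hl (Multiset.coe_eq_coe.1 (coe_sortDesc _))

lemma sortDesc_addP (p q : Multiset ℕ) :
    sortDesc (addP p q) = zipSum (sortDesc p) (sortDesc q) := by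
  refine sortDesc_coe (sortedGE_iff_antitone_getD.2 ?_)
  simp only [getD_zipSum]
  exact (sortedGE_iff_antitone_getD.1 (sortedGE_sortDesc p)).add
    (sortedGE_iff_antitone_getD.1 (sortedGE_sortDesc q))

lemma sortDesc_doubleP (p : Multiset ℕ) :
    sortDesc (doubleP p) = (sortDesc p).map (2 * ·) := by
  conv_lhs => rw [doubleP, ← coe_sortDesc p, Multiset.map_coe]
  refine sortDesc_coe (sortedGE_iff_antitone_getD.2 fun s t hst => ?_)
  simp only [getD_map_double]
  exact Nat.mul_le_mul_left 2 (sortedGE_iff_antitone_getD.1 (sortedGE_sortDesc p) hst)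

lemma addP_sum (p q : Multiset ℕ) : (addP p q).sum = p.sum + q.sum := by
  rw [addP, Multiset.sum_coe, sum_zipSum, ← Multiset.sum_coe, ← Multiset.sum_coe (sortDesc q),
    coe_sortDesc, coe_sortDesc]

lemma doubleP_sum (p : Multiset ℕ) : (doubleP p).sum = 2 * p.sum := by
  rw [doubleP, Multiset.sum_map_mul_left, Multiset.map_id']

lemma addP_zero (p : Multiset ℕ) : addP p 0 = p := by
  rw [addP, show sortDesc 0 = [] by simp [sortDesc]]
  cases h : sortDesc p
  all_goals rw [zipSum, ← h, coe_sortDesc]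

lemma addP_addP_doubleP (p q r : Multiset ℕ) :
    addP (addP p (doubleP q)) (doubleP r) = addP p (doubleP (addP q r)) := by
  rw [addP, sortDesc_addP, sortDesc_doubleP, sortDesc_doubleP, addP, sortDesc_doubleP,
    sortDesc_addP, zipSum_assoc, zipSum_map_double]

-- `part p 0` is the largest part; `part p t = 0` past the last part.
def part (p : Multiset ℕ) (t : ℕ) : ℕ := (sortDesc p).getD t 0

def partSum (p : Multiset ℕ) (k : ℕ) : ℕ := ∑ t ∈ range k, part p t

def excess (p : Multiset ℕ) (c : ℕ) : ℕ := (p.map (· - c)).sum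

lemma part_antitone (p : Multiset ℕ) : Antitone (part p) :=
  sortedGE_iff_antitone_getD.1 (sortedGE_sortDesc p)

lemma part_eq_zero {p : Multiset ℕ} {t : ℕ} (ht : p.card ≤ t) : part p t = 0 :=
  List.getD_eq_default _ _ (by simpa using ht)

lemma exists_part_eq_of_mem {p : Multiset ℕ} {v : ℕ} (h : v ∈ p) : ∃ t, part p t = v := by
  rw [← coe_sortDesc p, Multiset.mem_coe, List.mem_iff_getElem] at h
  obtain ⟨t, ht, rfl⟩ := h
  exact ⟨t, List.getD_eq_getElem _ _ ht⟩

lemma part_addP (p q : Multiset ℕ) (t : ℕ) : part (addP p q) t = part p t + part q t := by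
  rw [part, sortDesc_addP, getD_zipSum, part, part]

lemma part_doubleP (p : Multiset ℕ) (t : ℕ) : part (doubleP p) t = 2 * part p t := by
  rw [part, sortDesc_doubleP, getD_map_double, part]

lemma exists_part_eq {f : ℕ → ℕ} (hf : Antitone f) {N : ℕ} (hN : ∀ t, N ≤ t → f t = 0) :
    ∃ q : Multiset ℕ, q.card = N ∧ ∀ t, part q t = f t := by
  have hget : ∀ t, ((List.range N).map f).getD t 0 = f t := by
    intro t
    rcases lt_or_ge t N with ht | ht
    · rw [List.getD_eq_getElem _ _ (by simpa using ht)]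
      simp
    · rw [List.getD_eq_default _ _ (by simpa using ht), hN t ht]
  have hsorted : ((List.range N).map f).SortedGE := by
    rw [sortedGE_iff_antitone_getD]
    simpa only [hget] using hf
  exact ⟨(List.range N).map f, by simp, fun t => by rw [part, sortDesc_coe hsorted, hget]⟩

lemma partSum_addP (p q : Multiset ℕ) (k : ℕ) :
    partSum (addP p q) k = partSum p k + partSum q k := by
  simp only [partSum, part_addP, sum_add_distrib]

lemma partSum_doubleP (p : Multiset ℕ) (k : ℕ) : partSum (doubleP p) k = 2 * partSum p k := by
  simp only [partSum, part_doubleP, mul_sum]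

lemma excess_eq_sum_range {p : Multiset ℕ} (c : ℕ) {k : ℕ} (hk : p.card ≤ k) :
    excess p c = ∑ t ∈ range k, (part p t - c) := by
  rw [excess, ← coe_sortDesc p, Multiset.map_coe, Multiset.sum_coe,
    sum_map_eq_sum_range_getD _ (Nat.zero_sub c) (by simpa using hk), coe_sortDesc]
  rfl

lemma sum_eq_partSum {p : Multiset ℕ} {k : ℕ} (hk : p.card ≤ k) : p.sum = partSum p k := by
  simpa [excess, partSum] using excess_eq_sum_range 0 hk

lemma partSum_le_sum (p : Multiset ℕ) (k : ℕ) : partSum p k ≤ p.sum := by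
  rw [sum_eq_partSum (le_max_right k p.card)]
  exact sum_le_sum_of_subset (range_subset_range.2 (le_max_left _ _))

lemma dom_iff {r p : Multiset ℕ} :
    Dom r p ↔ r.sum = p.sum ∧ ∀ k, partSum r k ≤ partSum p k := by
  simp only [Dom, psum, sum_take_eq_sum_range_getD]
  rfl

lemma dom_refl (p : Multiset ℕ) : Dom p p :=
  dom_iff.2 ⟨rfl, fun _ => le_rfl⟩

lemma Dom.trans {r p q : Multiset ℕ} (hrp : Dom r p) (hpq : Dom p q) : Dom r q := by
  rw [dom_iff] at *
  exact ⟨hrp.1.trans hpq.1, fun k => (hrp.2 k).trans (hpq.2 k)⟩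

lemma Dom.addP_right {r p : Multiset ℕ} (h : Dom r p) (q : Multiset ℕ) :
    Dom (addP r q) (addP p q) := by
  rw [dom_iff, addP_sum, addP_sum, h.1] at *
  exact ⟨rfl, fun k => by simpa only [partSum_addP] using Nat.add_le_add_right (h.2 k) _⟩

lemma exists_lt_iff_le_part (p : Multiset ℕ) {a : ℕ} (ha : 0 < a) :
    ∃ i, ∀ t, t < i ↔ a ≤ part p t := by
  have hex : ∃ t, part p t < a := ⟨p.card, by rwa [part_eq_zero le_rfl]⟩
  refine ⟨Nat.find hex, fun t => ⟨fun ht => not_lt.1 (Nat.find_min hex ht), fun ht => ?_⟩⟩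
  by_contra h
  exact (not_lt.2 ht) ((part_antitone p (not_lt.1 h)).trans_lt (Nat.find_spec hex))

lemma le_of_forall_lt_iff_le_part {p : Multiset ℕ} {a b i m : ℕ} (hba : b ≤ a)
    (hi : ∀ t, t < i ↔ a ≤ part p t) (hm : ∀ t, t < m ↔ b ≤ part p t) : i ≤ m :=
  not_lt.1 fun h => lt_irrefl m ((hm m).2 (hba.trans ((hi m).1 h)))

-- With `partSum_eq_excess_add`: `partSum p k` is the least `excess p c + k * c` over `c`.
lemma partSum_le_excess_add (p : Multiset ℕ) (c k : ℕ) :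
    partSum p k ≤ excess p c + k * c :=
  calc partSum p k ≤ ∑ t ∈ range k, ((part p t - c) + c) :=
        sum_le_sum fun t _ => le_tsub_add
    _ = ∑ t ∈ range k, (part p t - c) + k * c := by
        rw [sum_add_distrib, sum_const, card_range, smul_eq_mul]
    _ ≤ excess p c + k * c := by
        rw [excess_eq_sum_range c (le_max_right k p.card)]
        exact Nat.add_le_add_right
          (sum_le_sum_of_subset (range_subset_range.2 (le_max_left _ _))) _

lemma partSum_eq_excess_add {p : Multiset ℕ} {c k : ℕ} (hk : part p k ≤ c)
    (hlt : ∀ t < k, c ≤ part p t) : partSum p k = excess p c + k * c := by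
  have hsplit : ∀ t ∈ range k, part p t = (part p t - c) + c :=
    fun t ht => (Nat.sub_add_cancel (hlt t (mem_range.1 ht))).symm
  have htail : ∀ j ∈ range p.card, part p (k + j) - c = 0 :=
    fun j _ => Nat.sub_eq_zero_of_le ((part_antitone p (Nat.le_add_right k j)).trans hk)
  rw [partSum, sum_congr rfl hsplit, sum_add_distrib, sum_const, card_range, smul_eq_mul,
    excess_eq_sum_range c (Nat.le_add_left p.card k), sum_range_add, sum_eq_zero htail, add_zero]

lemma exists_partSum_eq_excess_add (p : Multiset ℕ) (c : ℕ) :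
    ∃ k, partSum p k = excess p c + k * c := by
  obtain ⟨k, hk⟩ := exists_lt_iff_le_part p c.succ_pos
  exact ⟨k, partSum_eq_excess_add (Nat.lt_succ_iff.1 (not_le.1 ((hk k).not.1 (lt_irrefl k))))
    fun t ht => (Nat.le_succ c).trans ((hk t).1 ht)⟩

def EvenMult (ε : ℕ) (p : Multiset ℕ) : Prop := ∀ w ≠ 0, w % 2 = ε → Even (p.count w)

lemma excess_eq_sum_count (p : Multiset ℕ) (c : ℕ) :
    excess p c = ∑ m ∈ p.toFinset, p.count m * (m - c) := by
  simp only [excess, sum_multiset_map_count, smul_eq_mul]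

lemma even_count_mul_sub {p : Multiset ℕ} {ε c m : ℕ} (hc : (c + 1) % 2 = ε)
    (hm : c < m → m % 2 = ε → Even (p.count m)) : Even (p.count m * (m - c)) := by
  rcases le_or_gt m c with hmc | hmc
  · rw [Nat.sub_eq_zero_of_le hmc, mul_zero]
    exact Even.zero
  by_cases hmε : m % 2 = ε
  · exact (hm hmc hmε).mul_right _
  · exact (Nat.even_iff.2 (by omega)).mul_left _

lemma even_excess {r : Multiset ℕ} {ε c : ℕ} (hr : EvenMult ε r) (hc : (c + 1) % 2 = ε) :
    Even (excess r c) := by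
  rw [excess_eq_sum_count]
  exact even_sum _ fun m _ => even_count_mul_sub hc fun hcm => hr m (by omega)

lemma odd_excess_pred {p : Multiset ℕ} {ε v : ℕ} (hv : v ≠ 0) (hvε : v % 2 = ε)
    (hodd : Odd (p.count v)) (hmax : ∀ w, v < w → w % 2 = ε → Even (p.count w)) :
    Odd (excess p (v - 1)) := by
  have hmem : v ∈ p.toFinset := Multiset.mem_toFinset.2 (Multiset.count_pos.1 hodd.pos)
  rw [excess_eq_sum_count, ← add_sum_erase _ _ hmem, Nat.sub_sub_self (by omega), mul_one]
  refine hodd.add_even (even_sum _ fun m hm => even_count_mul_sub (ε := ε) (by omega) ?_)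
  exact fun hvm => hmax m (by have := ne_of_mem_erase hm; omega)

lemma exists_max_odd_count {ε : ℕ} {p : Multiset ℕ} (h : ¬ EvenMult ε p) :
    ∃ v, v ≠ 0 ∧ v % 2 = ε ∧ Odd (p.count v) ∧
      ∀ w, v < w → w % 2 = ε → Even (p.count w) := by
  set S := p.toFinset.filter fun w => w ≠ 0 ∧ w % 2 = ε ∧ ¬ Even (p.count w)
  have hS : ∀ w, w ∈ S ↔ w ≠ 0 ∧ w % 2 = ε ∧ ¬ Even (p.count w) := fun w => by
    simp only [S, mem_filter, Multiset.mem_toFinset, and_iff_right_iff_imp]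
    exact fun hw => Multiset.count_ne_zero.1 fun h0 => hw.2.2 (h0 ▸ Even.zero)
  simp only [EvenMult, not_forall] at h
  obtain ⟨w, hw0, hwε, hwodd⟩ := h
  obtain ⟨v, hvS, hvmax⟩ := S.exists_max_image id ⟨w, (hS w).2 ⟨hw0, hwε, hwodd⟩⟩
  obtain ⟨hv0, hvε, hvodd⟩ := (hS v).1 hvS
  refine ⟨v, hv0, hvε, Nat.not_even_iff_odd.1 hvodd, fun u hvu huε => ?_⟩
  by_contra hu
  exact not_le.2 hvu (hvmax u ((hS u).2 ⟨by omega, huε, hu⟩))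

lemma partSum_lt_of_dom_addP_doubleP {ε v i m k : ℕ} {p u r : Multiset ℕ}
    (hvε : v % 2 = ε) (hodd : Odd (excess p (v - 1)))
    (hi : ∀ t, t < i ↔ v ≤ part p t) (hm : ∀ t, t < m ↔ v - 1 ≤ part p t)
    (hr : EvenMult ε r) (hdom : Dom r (addP p (doubleP u))) (hik : i ≤ k) (hkm : k ≤ m) :
    partSum r k < partSum (addP p (doubleP u)) k := by
  set z := addP p (doubleP u)
  have hz : ∀ t, part z t = part p t + 2 * part u t := fun t => by rw [part_addP, part_doubleP]
  have hpk : part p k < v := not_le.1 ((hi k).not.1 (not_lt.2 hik))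
  set e := part u k
  set c := v - 1 + 2 * e
  have hu : ∀ t ≤ k, e ≤ part u t := fun t ht => part_antitone u ht
  have hzk : partSum z k = excess z c + k * c := partSum_eq_excess_add
    (by rw [hz]; omega) fun t ht => by
      have := (hm t).1 (by omega)
      have := hu t ht.le
      rw [hz]; omega
  obtain ⟨l, hl⟩ := exists_partSum_eq_excess_add r c
  have hrz : excess r c ≤ excess z c := by
    have := (dom_iff.1 hdom).2 l
    have := partSum_le_excess_add z c l
    omega
  by_contra hge
  have hzr : excess z c ≤ excess r c := by
    have := partSum_le_excess_add r c k
    have := (dom_iff.1 hdom).2 k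
    omega
  obtain ⟨M, hM⟩ := exists_lt_iff_le_part z c.succ_pos
  have hiM : i ≤ M := by
    by_contra h
    have := (hi M).1 (by omega)
    have := hu M (by omega)
    have := (hM M).2 (by rw [hz]; omega)
    omega
  have hMk : M ≤ k := by
    by_contra h
    have := (hM k).1 (by omega)
    rw [hz] at this; omega
  have hzM : partSum z M = excess z c + M * c :=
    partSum_eq_excess_add (by have := (hM M).not.1 (lt_irrefl M); omega)
      fun t ht => by have := (hM t).1 ht; omega
  have hpM : partSum p M = excess p (v - 1) + M * (v - 1) :=
    partSum_eq_excess_add (by have := (hi M).not.1 (by omega); omega)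
      fun t ht => (hm t).1 (by omega)
  have hzM' : partSum z M = partSum p M + 2 * partSum u M := by
    rw [partSum_addP, partSum_doubleP]
  have hMc : M * c = M * (v - 1) + 2 * (M * e) := by ring
  have hr_even := even_excess hr (show (c + 1) % 2 = ε by omega)
  rw [Nat.odd_iff] at hodd
  rw [Nat.even_iff] at hr_even
  omega

lemma exists_step {v i m : ℕ} {p : Multiset ℕ} (hi0 : 0 < i) (him : i ≤ m)
    (hi : ∀ t, t < i ↔ v ≤ part p t) (hm : ∀ t, t < m ↔ v - 1 ≤ part p t) :
    ∃ q : Multiset ℕ, q.sum = p.sum ∧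
      ∀ k, partSum q k + (if i ≤ k ∧ k ≤ m then 1 else 0) = partSum p k := by
  have hv : 0 < v := by
    have := (hi i).not.1 (lt_irrefl i)
    omega
  -- Lower the last part equal to `v` by one and raise the first part below `v - 1` by one.
  set f : ℕ → ℕ := fun t => part p t - (if t = i - 1 then 1 else 0) + (if t = m then 1 else 0)
  have hf : Antitone f := antitone_nat_of_succ_le fun t => by
    have := part_antitone p (Nat.le_add_right t 1)
    have := (hi t).1; have := mt (hi (t + 1)).2; have := (hm t).1; have := mt (hm (t + 1)).2
    simp only [f]
    split_ifs <;> omega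
  have hN : ∀ t, p.card + m + 1 ≤ t → f t = 0 := fun t ht => by
    simp only [f, part_eq_zero (show p.card ≤ t by omega)]
    split_ifs <;> omega
  obtain ⟨q, hqcard, hq⟩ := exists_part_eq hf hN
  have hpart : ∀ t,
      part q t + (if t = i - 1 then 1 else 0) = part p t + (if t = m then 1 else 0) := by
    intro t
    have := (hi t).1
    simp only [hq, f]
    split_ifs <;> omega
  have hsum : ∀ k, partSum q k + (if i ≤ k ∧ k ≤ m then 1 else 0) = partSum p k := by
    intro k
    have := sum_congr rfl fun t (_ : t ∈ range k) => hpart t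
    simp only [sum_add_distrib, sum_ite_eq', mem_range] at this
    simp only [partSum]
    split_ifs at this ⊢ <;> omega
  refine ⟨q, ?_, hsum⟩
  have := hsum (p.card + m + 1)
  rw [sum_eq_partSum hqcard.le, sum_eq_partSum (show p.card ≤ p.card + m + 1 by omega)]
  split_ifs at this <;> omega

lemma exists_reduction_step {ε : ℕ} {p : Multiset ℕ} (h : ¬ EvenMult ε p)
    (hp : ε = 1 → Even p.sum) :
    ∃ q, Dom q p ∧ (∃ k ≤ p.sum, partSum q k < partSum p k) ∧
      ∀ u r, EvenMult ε r → Dom r (addP p (doubleP u)) → Dom r (addP q (doubleP u)) := by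
  obtain ⟨v, hv0, hvε, hvodd, hmax⟩ := exists_max_odd_count h
  have hodd := odd_excess_pred hv0 hvε hvodd hmax
  have hv2 : 2 ≤ v := by
    by_contra hv
    obtain rfl : v = 1 := by omega
    have hexcess : excess p (1 - 1) = p.sum := by simp [excess]
    exact Nat.not_even_iff_odd.2 (hexcess ▸ hodd) (hp (by omega))
  obtain ⟨i, hi⟩ := exists_lt_iff_le_part p (show 0 < v by omega)
  obtain ⟨m, hm⟩ := exists_lt_iff_le_part p (show 0 < v - 1 by omega)
  have hi0 : 0 < i := by
    obtain ⟨t, ht⟩ := exists_part_eq_of_mem (Multiset.count_pos.1 hvodd.pos)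
    have := (hi t).2 ht.ge
    omega
  have him : i ≤ m := le_of_forall_lt_iff_le_part (Nat.sub_le v 1) hi hm
  obtain ⟨q, hqsum, hq⟩ := exists_step hi0 him hi hm
  have hqp : ∀ k, partSum q k ≤ partSum p k := fun k => by
    have := hq k
    split_ifs at this <;> omega
  have hip : i ≤ p.sum :=
    calc i = ∑ _t ∈ range i, 1 := by simp
      _ ≤ partSum p i := sum_le_sum fun t ht => by have := (hi t).1 (mem_range.1 ht); omega
      _ ≤ p.sum := partSum_le_sum p i
  have hqi : partSum q i < partSum p i := by
    have := hq i
    rw [if_pos ⟨le_rfl, him⟩] at this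
    omega
  refine ⟨q, dom_iff.2 ⟨hqsum, hqp⟩, ⟨i, hip, hqi⟩,
    fun u r hr hdom => dom_iff.2 ⟨?_, fun k => ?_⟩⟩
  · rw [(dom_iff.1 hdom).1, addP_sum, addP_sum, hqsum]
  · have hrk := (dom_iff.1 hdom).2 k
    have := hq k
    rw [partSum_addP] at hrk ⊢
    split_ifs at this with hk
    · have hlt := partSum_lt_of_dom_addP_doubleP hvε hodd hi hm hr hdom hk.1 hk.2
      rw [partSum_addP] at hlt
      omega
    · omega

theorem exists_evenMult_reduction {ε : ℕ} (p : Multiset ℕ) (hp : ε = 1 → Even p.sum) :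
    ∃ pc, EvenMult ε pc ∧ Dom pc p ∧
      ∀ u r, EvenMult ε r → Dom r (addP p (doubleP u)) → Dom r (addP pc (doubleP u)) := by
  induction hn : ∑ k ∈ range (p.sum + 1), partSum p k using Nat.strong_induction_on
    generalizing p with
  | _ n ih =>
    by_cases h : EvenMult ε p
    · exact ⟨p, h, dom_refl p, fun _ _ _ => id⟩
    obtain ⟨q, hqp, ⟨k, hk, hlt⟩, hq⟩ := exists_reduction_step h hp
    have hqsum := (dom_iff.1 hqp).1
    have hdecr : ∑ k ∈ range (q.sum + 1), partSum q k < n := by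
      rw [← hn, hqsum]
      exact sum_lt_sum (fun j _ => (dom_iff.1 hqp).2 j) ⟨k, mem_range.2 (by omega), hlt⟩
    obtain ⟨pc, hpc, hpcq, hpc_red⟩ := ih _ hdecr q (hqsum ▸ hp) rfl
    exact ⟨pc, hpc, hpcq.trans hqp, fun u r hr h => hpc_red u r hr (hq u r hr h)⟩

lemma collapse_congr {X : Multiset ℕ → Prop} {p q : Multiset ℕ}
    (h : ∀ r, X r → (Dom r p ↔ Dom r q)) : collapse X p = collapse X q := by
  have : IsCollapse X p = IsCollapse X q := funext fun c => propext <|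
    and_congr_right fun hc => and_congr (h c hc) <|
      forall₂_congr fun r hr => imp_congr_left (h r hr)
  rw [collapse, collapse, this]

lemma isCollapse_collapse {X : Multiset ℕ → Prop} {p q : Multiset ℕ} (h : IsCollapse X p q) :
    IsCollapse X p (collapse X p) := by
  rw [collapse, dif_pos ⟨q, h⟩]
  exact Exists.choose_spec _

theorem collapse_addP_collapse_doubleP {X : Multiset ℕ → Prop} {S : ℕ → Prop} {ε : ℕ}
    (hX : ∀ s, X s ↔ S s.sum ∧ EvenMult ε s) (p u : Multiset ℕ) (hS : S p.sum)
    (hp : ε = 1 → Even p.sum) :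
    collapse X (addP (collapse X p) (doubleP u)) = collapse X (addP p (doubleP u)) := by
  obtain ⟨pc, hpc, hpcp, hred⟩ := exists_evenMult_reduction p hp
  have hpc_collapse : IsCollapse X p pc := by
    refine ⟨(hX pc).2 ⟨(dom_iff.1 hpcp).1 ▸ hS, hpc⟩, hpcp, fun r hr hrp => ?_⟩
    simpa [doubleP, addP_zero] using hred 0 r ((hX r).1 hr).2 (by simpa [doubleP, addP_zero])
  obtain ⟨-, hcp, hmax⟩ := isCollapse_collapse hpc_collapse
  have hpcc := hmax pc hpc_collapse.1 hpcp
  exact collapse_congr fun r hr =>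
    ⟨fun h => h.trans (hcp.addP_right _),
      fun h => (hred u r ((hX r).1 hr).2 h).trans (hpcc.addP_right _)⟩

lemma typeB_iff (s : Multiset ℕ) : typeB s ↔ Odd s.sum ∧ EvenMult 0 s :=
  and_congr_right fun _ => forall₂_congr fun _ _ => imp_congr_left Nat.even_iff

lemma typeC_iff (s : Multiset ℕ) : typeC s ↔ Even s.sum ∧ EvenMult 1 s :=
  and_congr_right fun _ =>
    ⟨fun h w _ hw => h w (Nat.odd_iff.2 hw),
      fun h w hw => h w (by rintro rfl; exact Nat.not_odd_zero hw) (Nat.odd_iff.1 hw)⟩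

lemma typeD_iff (s : Multiset ℕ) : typeD s ↔ Even s.sum ∧ EvenMult 0 s :=
  and_congr_right fun _ => forall₂_congr fun _ _ => imp_congr_left Nat.even_iff

theorem collapse_trans_ind_general (q0 q1 q2 : Multiset ℕ) :
    (Odd q0.sum →
      collapseB (addP (collapseB (addP q0 (doubleP q1))) (doubleP q2)) =
        collapseB (addP q0 (doubleP (addP q1 q2)))) ∧
    (Even q0.sum →
      collapseC (addP (collapseC (addP q0 (doubleP q1))) (doubleP q2)) =
        collapseC (addP q0 (doubleP (addP q1 q2)))) ∧
    (Even q0.sum →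
      collapseD (addP (collapseD (addP q0 (doubleP q1))) (doubleP q2)) =
        collapseD (addP q0 (doubleP (addP q1 q2)))) := by
  have hsum : (addP q0 (doubleP q1)).sum = q0.sum + 2 * q1.sum := by
    rw [addP_sum, doubleP_sum]
  simp only [collapseB, collapseC, collapseD, ← addP_addP_doubleP]
  refine ⟨fun h => ?_, fun h => ?_, fun h => ?_⟩
  · exact collapse_addP_collapse_doubleP typeB_iff _ _
      (hsum ▸ h.add_even (even_two_mul _)) (absurd · zero_ne_one)
  · have h' := hsum ▸ h.add (even_two_mul q1.sum)
    exact collapse_addP_collapse_doubleP typeC_iff _ _ h' fun _ => h'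
  · exact collapse_addP_collapse_doubleP typeD_iff _ _
      (hsum ▸ h.add (even_two_mul _)) (absurd · zero_ne_one)

/-- transitivity identity for collapses,
`((𝔮₀ + 2𝔮₁)_X + 2𝔮₂)_X = (𝔮₀ + 2(𝔮₁ + 𝔮₂))_X`, with `X = B` when `|𝔮₀|` is odd and
`X ∈ {C, D}` when `|𝔮₀|` is even. -/
theorem collapse_trans_ind (q0 q1 q2 : Multiset ℕ)
    (h0 : IsPartition q0) (h1 : IsPartition q1) (h2 : IsPartition q2) :
    (Odd q0.sum →
      collapseB (addP (collapseB (addP q0 (doubleP q1))) (doubleP q2)) =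
        collapseB (addP q0 (doubleP (addP q1 q2)))) ∧
    (Even q0.sum →
      collapseC (addP (collapseC (addP q0 (doubleP q1))) (doubleP q2)) =
        collapseC (addP q0 (doubleP (addP q1 q2)))) ∧
    (Even q0.sum →
      collapseD (addP (collapseD (addP q0 (doubleP q1))) (doubleP q2)) =
        collapseD (addP q0 (doubleP (addP q1 q2)))) :=
  collapse_trans_ind_general q0 q1 q2

end PaperStmt
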